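/- An unconditional lattice polytope P ⊂ ℝ^d with 0 in its interior is reflexive if and only if P = U(P_G) for some perfect graph G on [d], where U(P_G) = {p : (|p_1|,...,|p_d|) ∈ P_G}. -/

import Mathlib

open Finset

/-- Dot product on `ℝ^d`. -/
def dot {d : ℕ} (x y : Fin d → ℝ) : ℝ := ∑ i, x i * y i

/-- Coordinatewise absolute value. -/
def absVec {d : ℕ} (p : Fin d → ℝ) : Fin d → ℝ := fun i => |p i|

/-- A vector of signs `±1`. -/
def IsSignVec {d : ℕ} (σ : Fin d → ℝ) : Prop := ∀ i, σ i = 1 ∨ σ i = -1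

/-- Coordinatewise sign flip. -/
def sflip {d : ℕ} (σ p : Fin d → ℝ) : Fin d → ℝ := fun i => σ i * p i

/-- A set is unconditional if it is closed under coordinate sign flips. -/
def Unconditional {d : ℕ} (K : Set (Fin d → ℝ)) : Prop :=
  ∀ σ : Fin d → ℝ, IsSignVec σ → ∀ p ∈ K, sflip σ p ∈ K

/-- A (nonempty) polytope: the convex hull of a nonempty finite set. -/
def IsPolytope {d : ℕ} (P : Set (Fin d → ℝ)) : Prop :=
  ∃ V : Finset (Fin d → ℝ), V.Nonempty ∧ P = convexHull ℝ (V : Set (Fin d → ℝ))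

/-- The nonnegative orthant of `ℝ^d`. -/
def nonnegOrthant (d : ℕ) : Set (Fin d → ℝ) := {x | ∀ i, 0 ≤ x i}

/-- An anti-blocking polytope: a polytope in the nonnegative orthant that is
down-closed with respect to the componentwise order. -/
def IsAntiBlocking {d : ℕ} (P : Set (Fin d → ℝ)) : Prop :=
  IsPolytope P ∧ P ⊆ nonnegOrthant d ∧
    ∀ q ∈ P, ∀ p : Fin d → ℝ, (∀ i, 0 ≤ p i ∧ p i ≤ q i) → p ∈ P

/-- The unconditional set associated to a set `P`: all points whose vector of
absolute values lies in `P`. -/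
def UPoly {d : ℕ} (P : Set (Fin d → ℝ)) : Set (Fin d → ℝ) := {p | absVec p ∈ P}

/-- Cast an integer vector to a real vector. -/
def intCast {d : ℕ} (a : Fin d → ℤ) : Fin d → ℝ := fun i => (a i : ℝ)

/-- A lattice polytope: convex hull of a nonempty finite set of integer points. -/
def IsLatticePolytope {d : ℕ} (P : Set (Fin d → ℝ)) : Prop :=
  ∃ V : Finset (Fin d → ℤ), V.Nonempty ∧ P = convexHull ℝ (intCast '' (V : Set (Fin d → ℤ)))

/-- Reflexive polytope: `0` is interior and `P` is cut out by integral
inequalities with right-hand side `1`. -/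
def IsReflexive {d : ℕ} (P : Set (Fin d → ℝ)) : Prop :=
  0 ∈ interior P ∧
    ∃ A : Finset (Fin d → ℤ), P = {x | ∀ a ∈ A, dot (intCast a) x ≤ 1}

/-- Indicator vector of a subset of `[d]`. -/
def indVec {d : ℕ} (s : Finset (Fin d)) : Fin d → ℝ := fun i => if i ∈ s then 1 else 0

/-- A stable (independent) set of a graph. -/
def IsStableSet {d : ℕ} (G : SimpleGraph (Fin d)) (s : Finset (Fin d)) : Prop :=
  ∀ i ∈ s, ∀ j ∈ s, ¬ G.Adj i j

/-- The stable set polytope: convex hull of indicator vectors of stable sets. -/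
def stableSetPolytope {d : ℕ} (G : SimpleGraph (Fin d)) : Set (Fin d → ℝ) :=
  convexHull ℝ {x | ∃ s : Finset (Fin d), IsStableSet G s ∧ x = indVec s}

/-- The clique number of a graph, as an extended natural number. -/
noncomputable def cliqueNumber {V : Type*} (G : SimpleGraph V) : ℕ∞ :=
  sSup {n : ℕ∞ | ∃ (m : ℕ) (t : Finset V), n = (m : ℕ∞) ∧ G.IsNClique m t}

/-- A graph is perfect if every induced subgraph has clique number equal to its
chromatic number. -/
def IsPerfect {d : ℕ} (G : SimpleGraph (Fin d)) : Prop :=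
  ∀ s : Set (Fin d), cliqueNumber (G.induce s) = (G.induce s).chromaticNumber

/-!
Write `STAB(G)` for the stable set polytope and `QSTAB(G)` for the polytope cut out by `x ≥ 0` and
the clique inequalities `∑_{i ∈ C} x i ≤ 1`. Always `STAB(G) ⊆ QSTAB(G)`, with equality iff `G` is
perfect: for a perfect graph, integral weights whose cliques weigh at most `N` split into `N`
stable sets (Lovász), and rounding approximates any point of `QSTAB(G)` by averages of such
splittings; conversely, a stable set carrying weight in `𝟙_T / ω(T) ∈ STAB(G)` meets every maximum
clique of `T`, which colours `T` with `ω(T)` colours (Chvátal).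

For perfect `G`, `U(STAB(G)) = U(QSTAB(G))` is cut out by `⟨a, x⟩ ≤ 1` for the signed clique
indicators `a`, so it is reflexive. Conversely, for a reflexive unconditional `P` the facet normals
have entries `≤ 1` and `P ⊆ [-1, 1]^d`, so the absolute values of the vertices of `P` are `0/1`
vectors. With `i ~ j` iff `e_i + e_j ∉ P` this gives `QSTAB(G) ⊆ P ∩ ℝ^d_{≥0} ⊆ STAB(G)`, hence `G`
is perfect and `P = U(STAB(G))`.
-/

open Function Filter Topology

section IndepSetSum

variable {V : Type*} [DecidableEq V] {G : SimpleGraph V}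

def IsIndepSetSum (G : SimpleGraph V) (N : ℕ) (z : V → ℕ) : Prop :=
  ∃ m : Multiset (Finset V), Multiset.card m = N ∧ (∀ s ∈ m, G.IsIndepSet (s : Set V)) ∧
    ∀ i, m.countP (i ∈ ·) = z i

lemma isIndepSetSum_zero : IsIndepSetSum G 0 0 :=
  ⟨0, rfl, by simp, by simp⟩

lemma Finset.sum_indicator_one_eq_card_inter {R : Type*} [AddCommMonoidWithOne R]
    (C s : Finset V) : ∑ i ∈ C, (s : Set V).indicator (1 : V → R) i = #(C ∩ s) := by
  simp [Set.indicator_apply, sum_ite_mem]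

lemma SimpleGraph.IsClique.card_inter_le_one {C s : Finset V} (hC : G.IsClique (C : Set V))
    (hs : G.IsIndepSet (s : Set V)) : #(C ∩ s) ≤ 1 :=
  card_le_one.mpr fun i hi j hj => by
    simp only [mem_inter] at hi hj
    by_contra hij
    exact hs hi.2 hj.2 hij (hC hi.1 hj.1 hij)

lemma IsIndepSetSum.add_indicator {N : ℕ} {z : V → ℕ} {s : Finset V} (h : IsIndepSetSum G N z)
    (hs : G.IsIndepSet (s : Set V)) : IsIndepSetSum G (N + 1) (z + (s : Set V).indicator 1) := by
  obtain ⟨m, rfl, hm, hz⟩ := h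
  refine ⟨s ::ₘ m, Multiset.card_cons s m, ?_, fun i => ?_⟩
  · simpa only [Multiset.mem_cons, forall_eq_or_imp] using ⟨hs, hm⟩
  · simp [Multiset.countP_cons, hz, Set.indicator_apply]

lemma IsIndepSetSum.exists_eq_add_indicator {N : ℕ} {z : V → ℕ} {v : V}
    (h : IsIndepSetSum G N z) (hv : 0 < z v) :
    ∃ (S : Finset V) (y : V → ℕ), v ∈ S ∧ G.IsIndepSet (S : Set V) ∧
      IsIndepSetSum G (N - 1) y ∧ z = y + (S : Set V).indicator 1 := by
  obtain ⟨m, rfl, hm, hz⟩ := h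
  obtain ⟨S, hSm, hvS⟩ := Multiset.countP_pos.mp (hz v ▸ hv)
  refine ⟨S, fun i => (m.erase S).countP (i ∈ ·), hvS, hm S hSm,
    ⟨m.erase S, by simp [Multiset.card_erase_of_mem hSm],
      fun s hs => hm s (Multiset.mem_of_mem_erase hs), fun i => rfl⟩, funext fun i => ?_⟩
  rw [← hz, ← Multiset.cons_erase hSm]
  simp [Multiset.countP_cons, Set.indicator_apply]

lemma IsIndepSetSum.sum_le {N : ℕ} {z : V → ℕ} {C : Finset V} (h : IsIndepSetSum G N z)
    (hC : G.IsClique (C : Set V)) : ∑ i ∈ C, z i ≤ N := by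
  obtain ⟨m, rfl, hm, hz⟩ := h
  simp_rw [← hz]
  clear hz
  induction m using Multiset.induction_on with
  | empty => simp
  | cons s m ih =>
    simp only [Multiset.mem_cons, forall_eq_or_imp] at hm
    have := hC.card_inter_le_one hm.1
    simp only [Multiset.countP_cons, sum_add_distrib, Multiset.card_cons, sum_boole,
      filter_mem_eq_inter, Nat.cast_id]
    linarith [ih hm.2]

variable [Fintype V]

lemma isIndepSetSum_of_le_one {N : ℕ} {z : V → ℕ}
    (hbase : ∀ T : Finset V, (∀ C ⊆ T, G.IsClique (C : Set V) → #C ≤ N) →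
      IsIndepSetSum G N ((T : Set V).indicator 1))
    (hz1 : ∀ i, z i ≤ 1) (hz : ∀ C : Finset V, G.IsClique (C : Set V) → ∑ i ∈ C, z i ≤ N) :
    IsIndepSetSum G N z := by
  set T := univ.filter (fun i => z i = 1)
  have hzT : (T : Set V).indicator 1 = z := by
    funext i
    have := hz1 i
    by_cases h : z i = 1 <;> simp [T, h]; omega
  rw [← hzT] at hz ⊢
  refine hbase T fun C hCT hC => ?_
  simpa [sum_indicator_one_eq_card_inter, inter_eq_left.mpr hCT] using hz C hC

/-- Induction on the total weight: if `z v ≥ 2`, split `z - 𝟙_v` and take out one of its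
independent sets `S ∋ v`; then every clique weighs at most `N - 1` under `z - 𝟙_S`. -/
theorem isIndepSetSum_of_forall_sum_le
    (hbase : ∀ (T : Finset V) (N : ℕ), (∀ C ⊆ T, G.IsClique (C : Set V) → #C ≤ N) →
      IsIndepSetSum G N ((T : Set V).indicator 1))
    (N : ℕ) (z : V → ℕ) (hz : ∀ C : Finset V, G.IsClique (C : Set V) → ∑ i ∈ C, z i ≤ N) :
    IsIndepSetSum G N z := by
  induction hn : ∑ i, z i using Nat.strong_induction_on generalizing z N with
  | _ n ih =>
  by_cases hz1 : ∀ i, z i ≤ 1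
  · exact isIndepSetSum_of_le_one (hbase · N) hz1 hz
  push Not at hz1
  obtain ⟨v, hv⟩ := hz1
  have hN : 1 ≤ N := by simpa using (hz {v} (by simp)).trans' (by simp; omega)
  obtain ⟨y, hzy⟩ : ∃ y, z = y + Pi.single v 1 :=
    ⟨z - Pi.single v 1, by funext i; by_cases h : i = v <;> simp [h]; omega⟩
  have hyv : 0 < y v := by simp [hzy] at hv; omega
  have hsum_y : ∑ i, y i < n := by simp [← hn, hzy, sum_add_distrib]
  obtain ⟨S, y', hvS, hS, hy', hyS⟩ := (ih _ hsum_y N y (fun C hC => (sum_le_sum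
    fun i _ => by simp [hzy]).trans (hz C hC)) rfl).exists_eq_add_indicator hyv
  have hz_eq : z = (y' + Pi.single v 1) + (S : Set V).indicator 1 := by rw [hzy, hyS]; abel
  have hsum (C : Finset V) :
      ∑ i ∈ C, z i = ∑ i ∈ C, (y' + Pi.single v 1 : V → ℕ) i + #(C ∩ S) := by
    simp [hz_eq, sum_add_distrib, sum_indicator_one_eq_card_inter]
  have hrest : IsIndepSetSum G (N - 1) (y' + Pi.single v 1) := by
    refine ih _ ?_ _ _ (fun C hC => ?_) rfl
    · have := hsum univ
      have : 0 < #(univ ∩ S) := card_pos.mpr ⟨v, by simpa using hvS⟩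
      omega
    · by_cases hvC : v ∈ C
      · have := hsum C
        have := hz C hC
        have : 0 < #(C ∩ S) := card_pos.mpr ⟨v, mem_inter.mpr ⟨hvC, hvS⟩⟩
        omega
      · simpa [sum_add_distrib, hvC] using hy'.sum_le hC
  rw [hz_eq, show N = N - 1 + 1 by omega]
  exact hrest.add_indicator hS

end IndepSetSum

section Perfect

variable {V : Type*} {G : SimpleGraph V}

lemma cliqueNumber_le_chromaticNumber (G : SimpleGraph V) : cliqueNumber G ≤ G.chromaticNumber :=
  sSup_le <| by
    rintro _ ⟨m, t, rfl, ht⟩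
    simpa [ht.2] using ht.1.card_le_chromaticNumber

lemma cliqueNumber_induce_le_iff {s : Set V} {N : ℕ} :
    cliqueNumber (G.induce s) ≤ N ↔
      ∀ C : Finset V, ↑C ⊆ s → G.IsClique (C : Set V) → #C ≤ N := by
  classical
  constructor
  · intro h C hCs hC
    have : (G.induce s).IsNClique #C (C.subtype (· ∈ s)) := by
      rw [SimpleGraph.isNClique_induce_iff, subtype_map_of_mem fun i hi => hCs hi]
      exact ⟨hC, rfl⟩
    unfold cliqueNumber at h
    exact_mod_cast h.trans' (le_sSup ⟨#C, _, rfl, this⟩)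
  · refine fun h => sSup_le ?_
    rintro _ ⟨m, t, rfl, ht⟩
    rw [SimpleGraph.isNClique_induce_iff] at ht
    simpa [← ht.2] using h _ (fun x hx => by simp at hx; exact hx.1) ht.1

lemma colorable_induce_iff_isIndepSetSum [DecidableEq V] {T : Finset V} {N : ℕ} :
    (G.induce (T : Set V)).Colorable N ↔ IsIndepSetSum G N ((T : Set V).indicator 1) := by
  constructor
  · rintro ⟨c⟩
    let colorClass (k : Fin N) : Finset V := T.filter fun i => ∃ h : i ∈ T, c ⟨i, h⟩ = k
    refine ⟨(univ : Finset (Fin N)).val.map colorClass, by simp, ?_, fun i => ?_⟩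
    · simp only [Multiset.mem_map, mem_val, mem_univ, true_and]
      rintro _ ⟨k, rfl⟩ i hi j hj hij hadj
      simp only [colorClass, coe_filter, Set.mem_ofPred_eq] at hi hj
      obtain ⟨-, hi, rfl⟩ := hi
      obtain ⟨-, hj, hjk⟩ := hj
      exact c.valid (by simpa using hadj) hjk.symm
    · rw [Multiset.countP_map]
      by_cases hi : i ∈ T
      · have : univ.filter (fun k => i ∈ colorClass k) = {c ⟨i, hi⟩} := by
          ext k
          simp [colorClass, hi, eq_comm]
        simp [← filter_val, this, hi]
      · simp [colorClass, hi]
  · rintro ⟨m, rfl, hm, hz⟩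
    have hcover (i : T) : ∃ s ∈ m.toFinset, i.1 ∈ s := by
      have : 0 < m.countP (i.1 ∈ ·) := by simp [hz]
      simpa using Multiset.countP_pos.mp this
    choose f hfm hf using hcover
    have c : (G.induce (T : Set V)).Coloring m.toFinset :=
      SimpleGraph.Coloring.mk (fun i => ⟨f i, hfm i⟩) fun {i j} hadj hij =>
        hm (f i) (by simpa using hfm i) (hf i)
          (by rw [show f i = f j by simpa using hij]; exact hf j)
          (fun h => hadj.ne (Subtype.ext h)) (by simpa using hadj)
    exact c.colorable.mono ((Fintype.card_coe _).trans_le (Multiset.toFinset_card_le m))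

end Perfect

lemma Convex.inv_card_smul_sum_mem {E : Type*} [AddCommGroup E] [Module ℝ E] {K : Set E}
    (hK : Convex ℝ K) {m : Multiset E} (hm : m ≠ 0) (h : ∀ x ∈ m, x ∈ K) :
    (Multiset.card m : ℝ)⁻¹ • m.sum ∈ K := by
  classical
  have hcard : (0 : ℝ) < Multiset.card m := by exact_mod_cast Multiset.card_pos.mpr hm
  rw [sum_multiset_count, smul_sum]
  simp_rw [← Nat.cast_smul_eq_nsmul ℝ, smul_smul]
  refine hK.sum_mem (fun x _ => by positivity) ?_ fun x hx => h x (Multiset.mem_toFinset.mp hx)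
  rw [← mul_sum, ← Nat.cast_sum, Multiset.toFinset_sum_count_eq, inv_mul_cancel₀ hcard.ne']

lemma mem_of_forall_update_mul_mem {ι R : Type*} [Fintype ι] [DecidableEq ι] [Mul R]
    {K : Set (ι → R)} {S : Set R} (hK : ∀ x ∈ K, ∀ i, ∀ c ∈ S, update x i (c * x i) ∈ K)
    {x y : ι → R} (hx : x ∈ K) (hy : ∀ i, ∃ c ∈ S, y i = c * x i) : y ∈ K := by
  choose c hc hyc using hy
  suffices ∀ U : Finset ι, (fun j => if j ∈ U then y j else x j) ∈ K by simpa using this univ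
  intro U
  induction U using Finset.induction_on with
  | empty => simpa using hx
  | insert i U hi ih =>
    convert hK _ ih i (c i) (hc i) using 1
    ext j
    by_cases hj : j = i
    · subst hj
      simp [hi, hyc]
    · simp [hj, update_of_ne]

lemma div_mul_cancel_of_abs_le {a b : ℝ} (h : |b| ≤ |a|) : b / a * a = b := by
  rcases eq_or_ne a 0 with rfl | ha
  · simpa [eq_comm] using h
  · exact div_mul_cancel₀ b ha

section StableSetPolytope

variable {d : ℕ} {G : SimpleGraph (Fin d)}

lemma isStableSet_iff_isIndepSet {s : Finset (Fin d)} :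
    IsStableSet G s ↔ G.IsIndepSet (s : Set (Fin d)) :=
  ⟨fun h _ hi _ hj _ => h _ hi _ hj, fun h _ hi _ hj hadj => h hi hj hadj.ne hadj⟩

theorem isPerfect_iff_forall_isIndepSetSum :
    IsPerfect G ↔ ∀ (T : Finset (Fin d)) (N : ℕ),
      (∀ C ⊆ T, G.IsClique (C : Set (Fin d)) → #C ≤ N) →
        IsIndepSetSum G N ((T : Set (Fin d)).indicator 1) := by
  constructor
  · intro hG T N hT
    refine colorable_induce_iff_isIndepSetSum.mp
      (SimpleGraph.chromaticNumber_le_iff_colorable.mp ?_)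
    rw [← hG]
    exact cliqueNumber_induce_le_iff.mpr fun C hCT => hT C (by exact_mod_cast hCT)
  · intro h s
    classical
    rw [← Set.coe_toFinset s]
    have hfin : cliqueNumber (G.induce (s.toFinset : Set (Fin d))) ≠ ⊤ :=
      ((cliqueNumber_le_chromaticNumber _).trans SimpleGraph.chromaticNumber_le_card).trans_lt
        (ENat.natCast_lt_top _) |>.ne
    obtain ⟨n, hn⟩ := ENat.ne_top_iff_exists.mp hfin
    refine le_antisymm (cliqueNumber_le_chromaticNumber _) ?_
    rw [← hn]
    refine (colorable_induce_iff_isIndepSetSum.mpr (h _ n fun C hC => ?_)).chromaticNumber_le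
    exact cliqueNumber_induce_le_iff.mp hn.ge C (by exact_mod_cast hC)

/-- `QSTAB(G)` in the literature. -/
def fractionalStableSetPolytope (G : SimpleGraph (Fin d)) : Set (Fin d → ℝ) :=
  {x | (∀ i, 0 ≤ x i) ∧ ∀ C : Finset (Fin d), G.IsClique (C : Set (Fin d)) → ∑ i ∈ C, x i ≤ 1}

lemma indVec_eq_indicator (s : Finset (Fin d)) : indVec s = (s : Set (Fin d)).indicator 1 := by
  ext i
  simp [indVec, Set.indicator_apply]

lemma indVec_mem_stableSetPolytope {s : Finset (Fin d)} (hs : IsStableSet G s) :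
    indVec s ∈ stableSetPolytope G :=
  subset_convexHull ℝ _ ⟨s, hs, rfl⟩

lemma convex_stableSetPolytope (G : SimpleGraph (Fin d)) : Convex ℝ (stableSetPolytope G) :=
  convex_convexHull ℝ _

lemma isClosed_stableSetPolytope (G : SimpleGraph (Fin d)) : IsClosed (stableSetPolytope G) := by
  have : {x | ∃ s, IsStableSet G s ∧ x = indVec s} ⊆ Set.range (indVec (d := d)) := by
    rintro _ ⟨s, -, rfl⟩
    exact ⟨s, rfl⟩
  exact ((Set.finite_range _).subset this).isClosed_convexHull ℝ

lemma convex_fractionalStableSetPolytope (G : SimpleGraph (Fin d)) :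
    Convex ℝ (fractionalStableSetPolytope G) := by
  rintro x ⟨hx0, hx⟩ y ⟨hy0, hy⟩ a b ha hb hab
  refine ⟨fun i => add_nonneg (mul_nonneg ha (hx0 i)) (mul_nonneg hb (hy0 i)), fun C hC => ?_⟩
  simp only [Pi.add_apply, Pi.smul_apply, smul_eq_mul, sum_add_distrib, ← mul_sum]
  nlinarith [hx C hC, hy C hC]

lemma stableSetPolytope_subset_fractional (G : SimpleGraph (Fin d)) :
    stableSetPolytope G ⊆ fractionalStableSetPolytope G := by
  refine convexHull_min ?_ (convex_fractionalStableSetPolytope G)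
  rintro _ ⟨s, hs, rfl⟩
  refine ⟨fun i => by by_cases hi : i ∈ s <;> simp [indVec, hi], fun C hC => ?_⟩
  rw [indVec_eq_indicator, sum_indicator_one_eq_card_inter]
  exact_mod_cast hC.card_inter_le_one (isStableSet_iff_isIndepSet.mp hs)

lemma Multiset.sum_map_indVec_apply (m : Multiset (Finset (Fin d))) (i : Fin d) :
    (m.map indVec).sum i = m.countP (i ∈ ·) := by
  induction m using Multiset.induction_on with
  | empty => simp
  | cons s m ih => by_cases hi : i ∈ s <;> simp [ih, indVec, hi, add_comm]

lemma div_mem_stableSetPolytope_of_isIndepSetSum {N : ℕ} {z : Fin d → ℕ}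
    (h : IsIndepSetSum G N z) (hN : N ≠ 0) :
    (fun i => (z i : ℝ) / N) ∈ stableSetPolytope G := by
  obtain ⟨m, rfl, hm, hz⟩ := h
  have hgen : ∀ x ∈ m.map indVec, x ∈ stableSetPolytope G := by
    simpa using fun s hs => indVec_mem_stableSetPolytope (isStableSet_iff_isIndepSet.mpr (hm s hs))
  convert (convex_stableSetPolytope G).inv_card_smul_sum_mem (by simpa using hN) hgen using 1
  ext i
  simp [Multiset.sum_map_indVec_apply, hz, div_eq_inv_mul]

/-- Rounding `N • x` down gives integral weights whose cliques weigh at most `N`; these split into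
`N` stable sets, and their averages converge to `x`. -/
theorem fractionalStableSetPolytope_subset_of_isPerfect (hG : IsPerfect G) :
    fractionalStableSetPolytope G ⊆ stableSetPolytope G := by
  rintro x ⟨hx0, hx⟩
  have hmem (N : ℕ) (hN : N ≠ 0) : (fun i => (⌊x i * N⌋₊ : ℝ) / N) ∈ stableSetPolytope G := by
    refine div_mem_stableSetPolytope_of_isIndepSetSum (isIndepSetSum_of_forall_sum_le
      (isPerfect_iff_forall_isIndepSetSum.mp hG) N _ fun C hC => ?_) hN
    have : ∑ i ∈ C, (⌊x i * N⌋₊ : ℝ) ≤ N := calc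
      _ ≤ ∑ i ∈ C, x i * N := sum_le_sum fun i _ => Nat.floor_le (mul_nonneg (hx0 i) N.cast_nonneg)
      _ ≤ N := by rw [← sum_mul]; exact mul_le_of_le_one_left (by positivity) (hx C hC)
    exact_mod_cast this
  have hlim : Tendsto (fun N : ℕ => fun i => (⌊x i * N⌋₊ : ℝ) / N) atTop (𝓝 x) :=
    tendsto_pi_nhds.mpr fun i =>
      (tendsto_nat_floor_mul_div_atTop (hx0 i)).comp tendsto_natCast_atTop_atTop
  exact (isClosed_stableSetPolytope G).mem_of_tendsto hlim ((eventually_ne_atTop 0).mono hmem)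

/-- Any stable set with positive weight in a convex combination representing `x` will do. -/
lemma exists_isStableSet_meets_tight_cliques {x : Fin d → ℝ} (hx : x ∈ stableSetPolytope G) :
    ∃ s, IsStableSet G s ∧ (∀ i ∈ s, 0 < x i) ∧
      ∀ K : Finset (Fin d), G.IsClique (K : Set (Fin d)) → ∑ i ∈ K, x i = 1 → (K ∩ s).Nonempty := by
  obtain ⟨ι, _, w, p, hw0, hw1, hp, rfl⟩ := mem_convexHull_iff_exists_fintype.mp hx
  choose s hs hps using hp
  obtain ⟨k, hk⟩ : ∃ k, 0 < w k := by
    by_contra! h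
    linarith [sum_nonpos fun k (_ : k ∈ univ) => h k]
  have happly (i : Fin d) : (∑ j, w j • p j) i = ∑ j, w j * indVec (s j) i := by
    simp [Finset.sum_apply, hps]
  refine ⟨s k, hs k, fun i hi => ?_, fun K hK hK1 => ?_⟩
  · rw [happly]
    calc 0 < w k * indVec (s k) i := by simpa [indVec, hi] using hk
      _ ≤ ∑ j, w j * indVec (s j) i :=
        single_le_sum (f := fun j => w j * indVec (s j) i)
          (fun j _ => mul_nonneg (hw0 j) (by unfold indVec; split_ifs <;> norm_num)) (mem_univ k)
  · rw [nonempty_iff_ne_empty]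
    intro hKs
    have hweight : ∑ i ∈ K, (∑ j, w j • p j) i = ∑ j, w j * #(K ∩ s j) := by
      simp_rw [happly]
      rw [sum_comm]
      simp [← mul_sum, indVec_eq_indicator, sum_indicator_one_eq_card_inter]
    have hlt : ∑ j, w j * #(K ∩ s j) < ∑ j, w j := by
      refine sum_lt_sum (fun j _ => mul_le_of_le_one_right (hw0 j) ?_)
        ⟨k, mem_univ _, by simpa [hKs] using hk⟩
      exact_mod_cast hK.card_inter_le_one (isStableSet_iff_isIndepSet.mp (hs j))
    linarith

/-- The stable set is found in the support of `𝟙_T / (N + 1) ∈ STAB(G)`. -/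
lemma exists_isStableSet_sdiff_clique_card_le
    (h : fractionalStableSetPolytope G ⊆ stableSetPolytope G)
    {T : Finset (Fin d)} {N : ℕ} (hT : ∀ C ⊆ T, G.IsClique (C : Set (Fin d)) → #C ≤ N + 1) :
    ∃ s ⊆ T, IsStableSet G s ∧ ∀ C ⊆ T \ s, G.IsClique (C : Set (Fin d)) → #C ≤ N := by
  set x : Fin d → ℝ := fun i => indVec T i / (N + 1)
  have hsum (C : Finset (Fin d)) : ∑ i ∈ C, x i = #(C ∩ T) / (N + 1) := by
    simp [x, ← sum_div, indVec_eq_indicator, sum_indicator_one_eq_card_inter]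
  have hx : x ∈ fractionalStableSetPolytope G := by
    refine ⟨fun i => by unfold x indVec; split_ifs <;> positivity, fun C hC => ?_⟩
    rw [hsum, div_le_one (by positivity)]
    exact_mod_cast hT _ inter_subset_right (hC.subset (by simp))
  obtain ⟨s, hs, hpos, hmeet⟩ := exists_isStableSet_meets_tight_cliques (h hx)
  refine ⟨s, fun i hi => ?_, hs, fun C hC hCl => ?_⟩
  · by_contra hiT
    simpa [x, indVec, hiT] using hpos i hi
  by_contra! hlt
  have hCT : C ⊆ T := hC.trans sdiff_subset
  have hcard : #C = N + 1 := le_antisymm (hT C hCT hCl) hlt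
  obtain ⟨i, hi⟩ := hmeet C hCl (by
    rw [hsum, inter_eq_left.mpr hCT, hcard]
    push_cast
    field_simp)
  exact (mem_sdiff.mp (hC (mem_inter.mp hi).1)).2 (mem_inter.mp hi).2

theorem isPerfect_of_fractionalStableSetPolytope_subset
    (h : fractionalStableSetPolytope G ⊆ stableSetPolytope G) : IsPerfect G := by
  refine isPerfect_iff_forall_isIndepSetSum.mpr fun T N => ?_
  induction N generalizing T with
  | zero =>
    intro hT
    obtain rfl : T = ∅ := eq_empty_of_forall_notMem fun i hi => by
      simpa using hT {i} (by simpa using hi) (by simp)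
    simpa [Pi.zero_def] using isIndepSetSum_zero
  | succ N ih =>
    intro hT
    obtain ⟨s, hsT, hs, hrest⟩ := exists_isStableSet_sdiff_clique_card_le h hT
    have hind : ((T \ s : Finset (Fin d)) : Set (Fin d)).indicator 1 + (s : Set (Fin d)).indicator 1
        = (T : Set (Fin d)).indicator (1 : Fin d → ℕ) := by
      ext i
      by_cases his : i ∈ s <;> by_cases hiT : i ∈ T <;> simp [his, hiT]
      exact hiT (hsT his)
    rw [← hind]
    exact (ih (T \ s) hrest).add_indicator (isStableSet_iff_isIndepSet.mp hs)

theorem isPerfect_iff_fractionalStableSetPolytope_subset :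
    IsPerfect G ↔ fractionalStableSetPolytope G ⊆ stableSetPolytope G :=
  ⟨fractionalStableSetPolytope_subset_of_isPerfect, isPerfect_of_fractionalStableSetPolytope_subset⟩

lemma update_zero_mem_stableSetPolytope {x : Fin d → ℝ} (hx : x ∈ stableSetPolytope G)
    (i : Fin d) : update x i 0 ∈ stableSetPolytope G := by
  have hlin : IsLinearMap ℝ fun y : Fin d → ℝ => update y i 0 := by
    constructor <;> intros <;> ext j <;> by_cases hj : j = i <;> simp [hj]
  refine convexHull_min ?_ ((convex_stableSetPolytope G).is_linear_preimage hlin) hx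
  rintro _ ⟨s, hs, rfl⟩
  have : update (indVec s) i 0 = indVec (s.erase i) := by
    ext j
    by_cases hj : j = i <;> simp [indVec, hj]
  rw [Set.mem_preimage, this]
  exact indVec_mem_stableSetPolytope fun a ha b hb =>
    hs a (mem_of_mem_erase ha) b (mem_of_mem_erase hb)

lemma mem_stableSetPolytope_of_le {x y : Fin d → ℝ} (hx : x ∈ stableSetPolytope G)
    (hy0 : ∀ i, 0 ≤ y i) (hyx : ∀ i, y i ≤ x i) : y ∈ stableSetPolytope G := by
  have hx0 (i : Fin d) : 0 ≤ x i := (hy0 i).trans (hyx i)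
  have habs (i : Fin d) : |y i| ≤ |x i| := by
    rw [abs_of_nonneg (hy0 i), abs_of_nonneg (hx0 i)]
    exact hyx i
  refine mem_of_forall_update_mul_mem (S := Set.Icc 0 1) (fun x hx i c hc => ?_) hx fun i =>
    ⟨y i / x i, ⟨div_nonneg (hy0 i) (hx0 i), div_le_one_of_le₀ (hyx i) (hx0 i)⟩,
      (div_mul_cancel_of_abs_le (habs i)).symm⟩
  convert convex_stableSetPolytope G hx (update_zero_mem_stableSetPolytope hx i) hc.1
    (sub_nonneg.mpr hc.2) (add_sub_cancel c 1) using 1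
  ext j
  by_cases hj : j = i
  · subst hj
    simp
  · simp [hj]
    ring

lemma convex_UPoly_stableSetPolytope (G : SimpleGraph (Fin d)) :
    Convex ℝ (UPoly (stableSetPolytope G)) := by
  intro x hx y hy a b ha hb hab
  refine mem_stableSetPolytope_of_le (convex_stableSetPolytope G hx hy ha hb hab)
    (fun i => abs_nonneg _) fun i => ?_
  simpa [absVec, abs_mul, abs_of_nonneg ha, abs_of_nonneg hb] using abs_add_le (a * x i) (b * y i)

end StableSetPolytope

section Unconditional

variable {d : ℕ} {P : Set (Fin d → ℝ)}

lemma Unconditional.update_mul_mem (hP : Unconditional P) (hconv : Convex ℝ P)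
    {x : Fin d → ℝ} (hx : x ∈ P) (i : Fin d) {c : ℝ} (hc : c ∈ Set.Icc (-1) 1) :
    update x i (c * x i) ∈ P := by
  have hflip : update x i (-x i) ∈ P := by
    convert hP (update 1 i (-1)) (fun j => by by_cases hj : j = i <;> simp [hj]) x hx using 1
    ext j
    by_cases hj : j = i <;> simp [sflip, hj]
  convert hconv hx hflip (a := (1 + c) / 2) (b := (1 - c) / 2) (by linarith [hc.1])
    (by linarith [hc.2]) (by ring) using 1
  ext j
  by_cases hj : j = i
  · subst hj
    simp only [update_self, Pi.add_apply, Pi.smul_apply, smul_eq_mul]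
    ring
  · simp only [update_of_ne hj, Pi.add_apply, Pi.smul_apply, smul_eq_mul]
    ring

lemma Unconditional.mem_of_abs_le (hP : Unconditional P) (hconv : Convex ℝ P)
    {x y : Fin d → ℝ} (hx : x ∈ P) (hy : ∀ i, |y i| ≤ |x i|) : y ∈ P :=
  mem_of_forall_update_mul_mem (fun _ hx i _ hc => hP.update_mul_mem hconv hx i hc) hx fun i =>
    ⟨y i / x i, abs_le.mp (by rw [abs_div]; exact div_le_one_of_le₀ (hy i) (abs_nonneg _)),
      (div_mul_cancel_of_abs_le (hy i)).symm⟩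

lemma Unconditional.single_mem (hP : Unconditional P) (hconv : Convex ℝ P) {x : Fin d → ℝ}
    (hx : x ∈ P) (i : Fin d) {t : ℝ} (ht : |t| ≤ |x i|) : Pi.single i t ∈ P :=
  hP.mem_of_abs_le hconv hx fun j => by
    by_cases hj : j = i
    · subst hj
      simpa using ht
    · simp [hj]

end Unconditional

section Reflexive

variable {d : ℕ} {P : Set (Fin d → ℝ)} {A : Finset (Fin d → ℤ)}

lemma IsLatticePolytope.convex (hP : IsLatticePolytope P) : Convex ℝ P := by
  obtain ⟨V, -, rfl⟩ := hP
  exact convex_convexHull ℝ _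

lemma IsLatticePolytope.isBounded (hP : IsLatticePolytope P) : Bornology.IsBounded P := by
  obtain ⟨V, -, rfl⟩ := hP
  exact ((V.finite_toSet.image intCast).isCompact_convexHull ℝ).isBounded

lemma dot_single (y : Fin d → ℝ) (i : Fin d) (t : ℝ) : dot y (Pi.single i t) = y i * t :=
  dotProduct_single y t i

lemma dot_indVec (y : Fin d → ℝ) (s : Finset (Fin d)) : dot y (indVec s) = ∑ i ∈ s, y i := by
  simp [dot, indVec, sum_ite_mem]

/-- Boundedness forces some facet normal `a` to have `a i ≠ 0`, and then `|a i| ≥ 1`. -/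
lemma Unconditional.abs_apply_le_one (huncond : Unconditional P) (hlat : IsLatticePolytope P)
    (hPA : P = {x | ∀ a ∈ A, dot (intCast a) x ≤ 1}) {x : Fin d → ℝ} (hx : x ∈ P) (i : Fin d) :
    |x i| ≤ 1 := by
  have hsingle {t : ℝ} (ht : |t| ≤ |x i|) : ∀ a ∈ A, (a i : ℝ) * t ≤ 1 := by
    simpa [hPA, dot_single, intCast] using huncond.single_mem hlat.convex hx i ht
  obtain ⟨a, ha, hai⟩ : ∃ a ∈ A, a i ≠ 0 := by
    by_contra! h
    obtain ⟨R, hR⟩ := hlat.isBounded.exists_norm_le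
    have hmem : Pi.single i (R + 1) ∈ P := by
      simp only [hPA, Set.mem_ofPred_eq, dot_single, intCast]
      intro a ha
      simp [h a ha]
    have := (norm_le_pi_norm _ i).trans (hR _ hmem)
    simp only [Pi.single_eq_same, Real.norm_eq_abs] at this
    linarith [le_abs_self (R + 1)]
  have h1 : (1 : ℝ) ≤ |(a i : ℝ)| := by exact_mod_cast Int.one_le_abs hai
  have h2 : |(a i : ℝ) * x i| ≤ 1 :=
    abs_le.mpr ⟨by linarith [hsingle (abs_neg (x i)).le a ha], hsingle le_rfl a ha⟩
  calc |x i| ≤ |(a i : ℝ)| * |x i| := le_mul_of_one_le_left (abs_nonneg _) h1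
    _ ≤ 1 := by rwa [← abs_mul]

lemma Unconditional.int_apply_eq_zero_or_one_or_neg_one (huncond : Unconditional P)
    (hlat : IsLatticePolytope P) (hPA : P = {x | ∀ a ∈ A, dot (intCast a) x ≤ 1})
    {v : Fin d → ℤ} (hv : intCast v ∈ P) (i : Fin d) : v i = 0 ∨ v i = 1 ∨ v i = -1 := by
  have := huncond.abs_apply_le_one hlat hPA hv i
  simp only [intCast] at this
  have := abs_le.mp (show |v i| ≤ 1 by exact_mod_cast this)
  omega

lemma Unconditional.single_one_mem (huncond : Unconditional P) (hlat : IsLatticePolytope P)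
    (hPA : P = {x | ∀ a ∈ A, dot (intCast a) x ≤ 1}) (h0 : 0 ∈ interior P) (i : Fin d) :
    Pi.single i 1 ∈ P := by
  obtain ⟨V, -, hPV⟩ := id hlat
  obtain ⟨ε, hε, hball⟩ := Metric.mem_nhds_iff.mp (mem_interior_iff_mem_nhds.mp h0)
  have hε2 : Pi.single i (ε / 2) ∈ P :=
    hball (by simpa [Pi.norm_single, abs_of_pos hε] using half_lt_self hε)
  obtain ⟨v, hv, hvi⟩ : ∃ v ∈ V, 0 < v i := by
    by_contra! h
    have hhalf : P ⊆ {x | x i ≤ 0} := hPV ▸ convexHull_min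
      (by rintro _ ⟨v, hv, rfl⟩; exact (show ((v i : ℤ) : ℝ) ≤ 0 by exact_mod_cast h v hv))
      (convex_halfSpace_le (LinearMap.proj i).isLinear 0)
    linarith [show ε / 2 ≤ 0 by simpa using hhalf hε2]
  have hvP : intCast v ∈ P := hPV ▸ subset_convexHull ℝ _ ⟨v, hv, rfl⟩
  have hvi1 : v i = 1 := by
    have := huncond.int_apply_eq_zero_or_one_or_neg_one hlat hPA hvP i
    omega
  exact huncond.single_mem hlat.convex hvP i (by simp [intCast, hvi1])

lemma coeff_le_one (hPA : P = {x | ∀ a ∈ A, dot (intCast a) x ≤ 1})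
    (hunit : ∀ i, Pi.single i 1 ∈ P) {a : Fin d → ℤ} (ha : a ∈ A) (i : Fin d) : a i ≤ 1 := by
  have := (hPA ▸ hunit i) a ha
  rw [dot_single] at this
  exact_mod_cast (mul_one (a i : ℝ)) ▸ this

/-- For reflexive unconditional `P`, its stable sets are exactly the `s` with `𝟙_s ∈ P`. -/
def polytopeGraph (P : Set (Fin d → ℝ)) : SimpleGraph (Fin d) where
  Adj i j := i ≠ j ∧ indVec {i, j} ∉ P
  symm := ⟨fun i j h => ⟨h.1.symm, by rw [pair_comm]; exact h.2⟩⟩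
  loopless := ⟨fun _ h => h.1 rfl⟩

lemma polytopeGraph_adj {i j : Fin d} :
    (polytopeGraph P).Adj i j ↔ i ≠ j ∧ indVec {i, j} ∉ P :=
  Iff.rfl

lemma isStableSet_polytopeGraph (huncond : Unconditional P) (hconv : Convex ℝ P)
    {s : Finset (Fin d)} (hs : indVec s ∈ P) : IsStableSet (polytopeGraph P) s := by
  intro i hi j hj hadj
  refine (polytopeGraph_adj.mp hadj).2 (huncond.mem_of_abs_le hconv hs fun k => ?_)
  by_cases hk : k = i ∨ k = j
  · rcases hk with rfl | rfl <;> simp [indVec, hi, hj]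
  · simp [indVec, not_or.mp hk]

lemma fractionalStableSetPolytope_polytopeGraph_subset
    (hPA : P = {x | ∀ a ∈ A, dot (intCast a) x ≤ 1}) (hcoef : ∀ a ∈ A, ∀ i, a i ≤ 1) :
    fractionalStableSetPolytope (polytopeGraph P) ⊆ P := by
  rintro x ⟨hx0, hx⟩
  rw [hPA]
  intro a ha
  have hclique : (polytopeGraph P).IsClique (univ.filter (0 < a ·) : Set (Fin d)) := by
    intro i hi j hj hij
    simp only [coe_filter, mem_univ, true_and, Set.mem_ofPred_eq] at hi hj
    refine polytopeGraph_adj.mpr ⟨hij, fun hmem => ?_⟩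
    have := (hPA ▸ hmem) a ha
    rw [dot_indVec, sum_pair hij] at this
    simp only [intCast] at this
    have : a i + a j ≤ 1 := by exact_mod_cast this
    omega
  calc dot (intCast a) x ≤ ∑ i, if 0 < a i then x i else 0 := by
        refine sum_le_sum fun i _ => ?_
        have := hcoef a ha i
        split_ifs with hai
        · simp [intCast, show a i = 1 by omega]
        · have : (a i : ℝ) ≤ 0 := by exact_mod_cast not_lt.mp hai
          exact mul_nonpos_of_nonpos_of_nonneg this (hx0 i)
    _ = ∑ i ∈ univ.filter (0 < a ·), x i := (sum_filter _ _).symm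
    _ ≤ 1 := hx _ hclique

lemma subset_UPoly_stableSetPolytope (hlat : IsLatticePolytope P) (huncond : Unconditional P)
    (hPA : P = {x | ∀ a ∈ A, dot (intCast a) x ≤ 1}) :
    P ⊆ UPoly (stableSetPolytope (polytopeGraph P)) := by
  obtain ⟨V, -, hPV⟩ := id hlat
  refine hPV.trans_subset (convexHull_min ?_ (convex_UPoly_stableSetPolytope _))
  rintro _ ⟨v, hv, rfl⟩
  have hvP : intCast v ∈ P := hPV ▸ subset_convexHull ℝ _ ⟨v, hv, rfl⟩
  have habs : absVec (intCast v) = indVec (univ.filter (v · ≠ 0)) := by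
    ext i
    rcases huncond.int_apply_eq_zero_or_one_or_neg_one hlat hPA hvP i with h | h | h <;>
      simp [absVec, indVec, intCast, h]
  show absVec (intCast v) ∈ stableSetPolytope (polytopeGraph P)
  rw [habs]
  refine indVec_mem_stableSetPolytope (isStableSet_polytopeGraph huncond hlat.convex ?_)
  exact huncond.mem_of_abs_le hlat.convex hvP fun i => by simp [← habs, absVec]

theorem exists_isPerfect_of_isReflexive (hlat : IsLatticePolytope P) (huncond : Unconditional P)
    (hrefl : IsReflexive P) :
    ∃ G : SimpleGraph (Fin d), IsPerfect G ∧ P = UPoly (stableSetPolytope G) := by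
  obtain ⟨h0, A, hPA⟩ := hrefl
  have hQP := fractionalStableSetPolytope_polytopeGraph_subset hPA
    (fun a ha => coeff_le_one hPA (huncond.single_one_mem hlat hPA h0) ha)
  have hPS := subset_UPoly_stableSetPolytope hlat huncond hPA
  refine ⟨polytopeGraph P, isPerfect_iff_fractionalStableSetPolytope_subset.mpr ?_,
    hPS.antisymm ?_⟩
  · intro x hx
    have habs : absVec x = x := funext fun i => abs_of_nonneg (hx.1 i)
    simpa [UPoly, habs] using hPS (hQP hx)
  · intro x hx
    exact huncond.mem_of_abs_le hlat.convex (hQP (stableSetPolytope_subset_fractional _ hx))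
      fun i => by simp [absVec]

open scoped Classical in
noncomputable def signedCliqueVectors (G : SimpleGraph (Fin d)) : Finset (Fin d → ℤ) :=
  (Fintype.piFinset fun _ => Icc (-1) 1).filter fun a => G.IsClique {i | a i ≠ 0}

lemma dot_le_sum_abs {a : Fin d → ℤ} (ha : ∀ i, a i ∈ Icc (-1) 1) (x : Fin d → ℝ) :
    dot (intCast a) x ≤ ∑ i ∈ univ.filter (a · ≠ 0), |x i| := by
  rw [sum_filter]
  refine sum_le_sum fun i _ => ?_
  split_ifs with hai
  · have : |(a i : ℝ)| ≤ 1 := abs_le.mpr ⟨by exact_mod_cast (mem_Icc.mp (ha i)).1,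
      by exact_mod_cast (mem_Icc.mp (ha i)).2⟩
    calc (a i : ℝ) * x i ≤ |(a i : ℝ) * x i| := le_abs_self _
      _ ≤ |x i| := by rw [abs_mul]; exact mul_le_of_le_one_left (abs_nonneg _) this
  · simp [intCast, not_not.mp hai]

lemma UPoly_fractionalStableSetPolytope (G : SimpleGraph (Fin d)) :
    UPoly (fractionalStableSetPolytope G) =
      {x | ∀ a ∈ signedCliqueVectors G, dot (intCast a) x ≤ 1} := by
  ext x
  simp only [UPoly, fractionalStableSetPolytope, absVec, Set.mem_ofPred_eq, signedCliqueVectors,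
    mem_filter, Fintype.mem_piFinset]
  constructor
  · rintro ⟨-, hx⟩ a ⟨ha, hclique⟩
    exact (dot_le_sum_abs ha x).trans (hx _ (by simpa using hclique))
  · intro hx
    refine ⟨fun i => abs_nonneg _, fun C hC => ?_⟩
    let a : Fin d → ℤ := fun i => if i ∈ C then (if 0 ≤ x i then 1 else -1) else 0
    have hsupp : {i | a i ≠ 0} = (C : Set (Fin d)) := by
      ext i
      by_cases hi : i ∈ C <;> simp [a, hi]
      split_ifs <;> simp
    convert hx a ⟨fun i => by simp only [a]; split_ifs <;> simp, hsupp ▸ hC⟩ using 1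
    simp only [dot, intCast, a]
    rw [← sum_subset (subset_univ C) fun i _ hi => by simp [hi]]
    refine sum_congr rfl fun i hi => ?_
    by_cases hxi : 0 ≤ x i
    · simp [hi, hxi, abs_of_nonneg hxi]
    · simp [hi, hxi, abs_of_neg (not_le.mp hxi)]

end Reflexive

/-- an unconditional lattice polytope with `0` in its interior is
reflexive iff it is the unconditional polytope of the stable set polytope of a
perfect graph. -/
theorem stmt10 {d : ℕ} (P : Set (Fin d → ℝ)) (hlat : IsLatticePolytope P)
    (huncond : Unconditional P) (h0 : 0 ∈ interior P) :
    IsReflexive P ↔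
      ∃ G : SimpleGraph (Fin d), IsPerfect G ∧ P = UPoly (stableSetPolytope G) := by
  refine ⟨exists_isPerfect_of_isReflexive hlat huncond, ?_⟩
  rintro ⟨G, hG, rfl⟩
  refine ⟨h0, signedCliqueVectors G, ?_⟩
  rw [← UPoly_fractionalStableSetPolytope,
    (stableSetPolytope_subset_fractional G).antisymm
      (isPerfect_iff_fractionalStableSetPolytope_subset.mp hG)]
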